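/- For all points a, b ∈ ℝ^n, the tropical convex hull of the ordinary line segment between a and b equals the ordinary convex hull of the tropical convex hull of {a, b}; that is, tconv(segment ℝ a b) = convexHull(tconv({a, b})). -/

import Mathlib

/-- A set `U ⊆ ℝ^n` is tropically convex (min-plus convention). -/
def TropConvex {n : ℕ} (U : Set (Fin n → ℝ)) : Prop :=
  ∀ x ∈ U, ∀ y ∈ U, ∀ a b : ℝ, min a b = 0 →
    (fun i => min (a + x i) (b + y i)) ∈ U

/-- The tropical convex hull: the intersection of all tropically convex sets containing `U`. -/
def tconv {n : ℕ} (U : Set (Fin n → ℝ)) : Set (Fin n → ℝ) :=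
  ⋂₀ {V | TropConvex V ∧ U ⊆ V}

/-!
Write `d = a - b`. Both sides equal the set of points `a + f ∘ d`, where `f : ℝ → ℝ` vanishes at
`0` and has a supporting line of slope in `[-1, 0]` at every point. This set contains the segment
(take `f` linear) and is both tropically convex and convex, since tropical and convex combinations
of such `f` are again such functions. Conversely, `f` is the minimum of its supporting lines at the
finitely many values of `d` and at `0`, which exhibits `a + f ∘ d` as a tropical combination of
points of the segment. On the other hand, on the finite grid of these values, `f` is a convex
combination of the hinges `x ↦ max s 0 - max s x`, weighted by the drops of its chord slopes, and
the points `a + hinge s ∘ d` are exactly the tropical combinations of `a` and `b`.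
-/

section TropicalHull

variable {n : ℕ}

lemma subset_tconv (U : Set (Fin n → ℝ)) : U ⊆ tconv U :=
  fun _ hx _ hV => hV.2 hx

lemma tconv_min {U V : Set (Fin n → ℝ)} (hV : TropConvex V) (hUV : U ⊆ V) : tconv U ⊆ V :=
  Set.sInter_subset_of_mem ⟨hV, hUV⟩

lemma tropConvex_tconv (U : Set (Fin n → ℝ)) : TropConvex (tconv U) :=
  fun x hx y hy α β hαβ V hV => hV.1 x (hx V hV) y (hy V hV) α β hαβ

lemma Finset.add_inf' {ι G : Type*} [AddGroup G] [LinearOrder G] [AddLeftMono G]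
    (s : Finset ι) (f : ι → G) (a : G) (hs : s.Nonempty) :
    a + s.inf' hs f = s.inf' hs fun i => a + f i :=
  map_finset_inf' (OrderIso.addLeft a) hs f

theorem TropConvex.inf'_add_mem {V : Set (Fin n → ℝ)} (hV : TropConvex V) {ι : Type*}
    {s : Finset ι} (hs : s.Nonempty) {c : ι → ℝ} (hc : s.inf' hs c = 0) {u : ι → Fin n → ℝ}
    (hu : ∀ k ∈ s, u k ∈ V) : (fun i => s.inf' hs fun k => c k + u k i) ∈ V := by
  induction hs using Finset.Nonempty.cons_induction generalizing c with
  | singleton k =>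
    simp only [Finset.inf'_singleton] at hc ⊢
    simpa [hc] using hu k (Finset.mem_singleton_self k)
  | cons k s _ hs ih =>
    rw [Finset.inf'_cons hs] at hc
    set γ := s.inf' hs c
    have hrest : (fun i => s.inf' hs fun l => (c l - γ) + u l i) ∈ V := by
      refine ih ?_ fun l hl => hu l (Finset.mem_cons_of_mem hl)
      simp only [sub_eq_neg_add, ← Finset.add_inf', γ, neg_add_cancel]
    convert hV _ (hu k (Finset.mem_cons_self k s)) _ hrest (c k) γ hc using 2 with i
    rw [Finset.inf'_cons hs, Finset.add_inf']
    simp only [add_sub_cancel, ← add_assoc]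

end TropicalHull

def HasSupportLines (f : ℝ → ℝ) : Prop :=
  ∀ p, ∃ σ ∈ Set.Icc (-1 : ℝ) 0, ∀ x, f x ≤ f p + σ * (x - p)

lemma slope_le_of_forall_le_add_mul {f : ℝ → ℝ} {p z σ : ℝ}
    (h : ∀ x, f x ≤ f p + σ * (x - p)) (hpz : p < z) : slope f p z ≤ σ := by
  rw [slope_def_field, div_le_iff₀ (sub_pos.2 hpz)]
  linarith [h z]

lemma le_slope_of_forall_le_add_mul {f : ℝ → ℝ} {p x σ : ℝ}
    (h : ∀ x, f x ≤ f p + σ * (x - p)) (hxp : x < p) : σ ≤ slope f x p := by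
  rw [slope_def_field, le_div_iff₀ (sub_pos.2 hxp)]
  linarith [h x]

namespace HasSupportLines

variable {f g : ℝ → ℝ}

lemma const_mul {σ : ℝ} (hσ : σ ∈ Set.Icc (-1 : ℝ) 0) : HasSupportLines (fun x => σ * x) :=
  fun _ => ⟨σ, hσ, fun x => by linarith⟩

lemma min_add (hf : HasSupportLines f) (hg : HasSupportLines g) (α β : ℝ) :
    HasSupportLines (fun x => min (α + f x) (β + g x)) := by
  intro p
  rcases le_total (α + f p) (β + g p) with h | h
  · obtain ⟨σ, hσ, hsupp⟩ := hf p
    refine ⟨σ, hσ, fun x => ?_⟩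
    dsimp only
    rw [min_eq_left h]
    linarith [min_le_left (α + f x) (β + g x), hsupp x]
  · obtain ⟨σ, hσ, hsupp⟩ := hg p
    refine ⟨σ, hσ, fun x => ?_⟩
    dsimp only
    rw [min_eq_right h]
    linarith [min_le_right (α + f x) (β + g x), hsupp x]

lemma smul_add_smul (hf : HasSupportLines f) (hg : HasSupportLines g) {u v : ℝ} (hu : 0 ≤ u)
    (hv : 0 ≤ v) (huv : u + v = 1) : HasSupportLines (u • f + v • g) := by
  intro p
  obtain ⟨σ, ⟨hσl, hσu⟩, hfp⟩ := hf p
  obtain ⟨τ, ⟨hτl, hτu⟩, hgp⟩ := hg p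
  refine ⟨u * σ + v * τ, ⟨by nlinarith, by nlinarith⟩, fun x => ?_⟩
  simp only [Pi.add_apply, Pi.smul_apply, smul_eq_mul]
  nlinarith [mul_le_mul_of_nonneg_left (hfp x) hu, mul_le_mul_of_nonneg_left (hgp x) hv]

lemma slope_mem (hf : HasSupportLines f) {x y : ℝ} (hxy : x < y) :
    slope f x y ∈ Set.Icc (-1 : ℝ) 0 := by
  obtain ⟨σ, hσ, hx⟩ := hf x
  obtain ⟨τ, hτ, hy⟩ := hf y
  exact ⟨hτ.1.trans (le_slope_of_forall_le_add_mul hy hxy),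
    (slope_le_of_forall_le_add_mul hx hxy).trans hσ.2⟩

lemma slope_anti (hf : HasSupportLines f) {x y z : ℝ} (hxy : x < y) (hyz : y < z) :
    slope f y z ≤ slope f x y := by
  obtain ⟨σ, -, hy⟩ := hf y
  exact (slope_le_of_forall_le_add_mul hy hyz).trans (le_slope_of_forall_le_add_mul hy hxy)

end HasSupportLines

def hinge (s x : ℝ) : ℝ := max s 0 - max s x

/-- Chord slopes of `f` along `q 0 < ⋯ < q (m - 1)`, padded by `0` on the left and `-1` on the
right, so that the hinge weights `gridSlope f q m k - gridSlope f q m (k + 1)` sum to `1`. -/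
noncomputable def gridSlope (f : ℝ → ℝ) (q : ℕ → ℝ) (m : ℕ) : ℕ → ℝ
  | 0 => 0
  | k + 1 => if k + 1 < m then slope f (q k) (q (k + 1)) else -1

lemma sum_mul_max_succ_sub_max {q : ℕ → ℝ} {m j : ℕ} (hq : MonotoneOn q (Set.Iio m))
    (hj : j + 1 < m) (w : ℕ → ℝ) :
    ∑ k ∈ Finset.range m, w k * (max (q k) (q (j + 1)) - max (q k) (q j)) =
      (∑ k ∈ Finset.range (j + 1), w k) * (q (j + 1) - q j) := by
  have hmem : ∀ {k}, k ≤ j + 1 → k ∈ Set.Iio m := fun hk => lt_of_le_of_lt hk hj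
  have hqj : q j ≤ q (j + 1) := hq (hmem (by omega)) (hmem le_rfl) (Nat.le_succ j)
  have hlow : ∀ k ∈ Finset.range (j + 1),
      w k * (max (q k) (q (j + 1)) - max (q k) (q j)) = w k * (q (j + 1) - q j) := by
    intro k hk
    have hkj : k ≤ j := Nat.lt_succ_iff.1 (Finset.mem_range.1 hk)
    have hqkj : q k ≤ q j := hq (hmem (by omega)) (hmem (by omega)) hkj
    rw [max_eq_right hqkj, max_eq_right (hqkj.trans hqj)]
  have hhigh : ∀ k ∈ Finset.Ico (j + 1) m,
      w k * (max (q k) (q (j + 1)) - max (q k) (q j)) = 0 := by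
    intro k hk
    obtain ⟨hjk, hkm⟩ := Finset.mem_Ico.1 hk
    have hqjk : q (j + 1) ≤ q k := hq (hmem le_rfl) hkm hjk
    rw [max_eq_left hqjk, max_eq_left (hqj.trans hqjk), sub_self, mul_zero]
  rw [← Finset.sum_range_add_sum_Ico _ hj.le, Finset.sum_congr rfl hlow,
    Finset.sum_congr rfl hhigh, Finset.sum_const_zero, add_zero, Finset.sum_mul]

namespace HasSupportLines

variable {f : ℝ → ℝ} {q : ℕ → ℝ} {m : ℕ}

lemma gridSlope_succ_mem (hf : HasSupportLines f) (hq : StrictMonoOn q (Set.Iio m)) (k : ℕ) :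
    gridSlope f q m (k + 1) ∈ Set.Icc (-1 : ℝ) 0 := by
  rw [gridSlope]
  split_ifs with hk
  · exact hf.slope_mem (hq (Set.mem_Iio.2 (by omega)) hk (Nat.lt_succ_self k))
  · norm_num

lemma gridSlope_antitone (hf : HasSupportLines f) (hq : StrictMonoOn q (Set.Iio m)) :
    Antitone (gridSlope f q m) := by
  refine antitone_nat_of_succ_le fun k => ?_
  cases k with
  | zero => exact (hf.gridSlope_succ_mem hq 0).2
  | succ k =>
    by_cases hk : k + 2 < m
    · have hk' : k + 1 < m := by omega
      simp only [gridSlope, if_pos hk, if_pos hk']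
      exact hf.slope_anti (hq (Set.mem_Iio.2 (by omega)) hk' (Nat.lt_succ_self k))
        (hq hk' hk (Nat.lt_succ_self (k + 1)))
    · rw [gridSlope, if_neg hk]
      exact (hf.gridSlope_succ_mem hq k).1

theorem exists_hinge_weights (hf : HasSupportLines f) (hf0 : f 0 = 0)
    (hq : StrictMonoOn q (Set.Iio m)) {j₀ : ℕ} (hj₀ : j₀ < m) (hqj₀ : q j₀ = 0) :
    ∃ w : ℕ → ℝ, (∀ k, 0 ≤ w k) ∧ ∑ k ∈ Finset.range m, w k = 1 ∧
      ∀ j < m, f (q j) = ∑ k ∈ Finset.range m, w k * hinge (q k) (q j) := by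
  set τ := gridSlope f q m
  set w : ℕ → ℝ := fun k => τ k - τ (k + 1)
  set H : ℝ → ℝ := fun x => ∑ k ∈ Finset.range m, w k * max (q k) x
  have hstep : ∀ j, j + 1 < m → f (q (j + 1)) + H (q (j + 1)) = f (q j) + H (q j) := by
    intro j hj
    have hH : H (q (j + 1)) - H (q j) = -τ (j + 1) * (q (j + 1) - q j) := by
      simp only [H, ← Finset.sum_sub_distrib, ← mul_sub]
      rw [sum_mul_max_succ_sub_max hq.monotoneOn hj, Finset.sum_range_sub']
      simp [τ, gridSlope]
    have hfq : f (q (j + 1)) - f (q j) = τ (j + 1) * (q (j + 1) - q j) := by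
      have := sub_smul_slope f (q j) (q (j + 1))
      simp only [τ, gridSlope, if_pos hj, smul_eq_mul, vsub_eq_sub] at this ⊢
      linarith
    linarith
  have hconst : ∀ j < m, f (q j) + H (q j) = f (q 0) + H (q 0) := by
    intro j hj
    induction j with
    | zero => rfl
    | succ j ih => rw [hstep j hj, ih (by omega)]
  obtain ⟨m, rfl⟩ : ∃ m', m = m' + 1 := Nat.exists_eq_add_one_of_ne_zero (by omega)
  refine ⟨w, fun k => sub_nonneg.2 (hf.gridSlope_antitone hq k.le_succ), ?_, fun j hj => ?_⟩
  · rw [Finset.sum_range_sub']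
    simp [τ, gridSlope]
  · calc f (q j)
        = f (q j₀) + H (q j₀) - H (q j) := by linarith [hconst j hj, hconst j₀ hj₀]
      _ = ∑ k ∈ Finset.range (m + 1), w k * hinge (q k) (q j) := by
        simp [H, hinge, hqj₀, hf0, mul_sub, Finset.sum_sub_distrib]

theorem exists_mem_convexHull_eqOn (hf : HasSupportLines f) (hf0 : f 0 = 0) (D : Finset ℝ) :
    ∃ g ∈ convexHull ℝ (Set.range hinge), Set.EqOn f g D := by
  classical
  set D' := insert 0 D
  set e := D'.orderEmbOfFin rfl
  set q : ℕ → ℝ := fun k => if h : k < D'.card then e ⟨k, h⟩ else 0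
  have hq : StrictMonoOn q (Set.Iio D'.card) := fun k hk l hl hkl => by
    simp only [q, dif_pos (Set.mem_Iio.1 hk), dif_pos (Set.mem_Iio.1 hl)]
    exact e.strictMono hkl
  have hq_surj : ∀ x ∈ D', ∃ j < D'.card, q j = x := by
    intro x hx
    obtain ⟨⟨j, hj⟩, hjx⟩ : x ∈ Set.range e := by rwa [Finset.range_orderEmbOfFin]
    exact ⟨j, hj, by simp [q, hj, hjx]⟩
  obtain ⟨j₀, hj₀, hqj₀⟩ := hq_surj 0 (Finset.mem_insert_self 0 D)
  obtain ⟨w, hw0, hw1, hfw⟩ := hf.exists_hinge_weights hf0 hq hj₀ hqj₀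
  refine ⟨∑ k ∈ Finset.range D'.card, w k • hinge (q k),
    (convex_convexHull ℝ _).sum_mem (fun k _ => hw0 k) hw1
      (fun k _ => subset_convexHull ℝ _ ⟨q k, rfl⟩), fun x hx => ?_⟩
  obtain ⟨j, hj, rfl⟩ := hq_surj x (Finset.mem_insert_of_mem hx)
  simp [hfw j hj, Finset.sum_apply]

end HasSupportLines

def segmentProfiles : Set (ℝ → ℝ) := {f | f 0 = 0 ∧ HasSupportLines f}

lemma convex_segmentProfiles : Convex ℝ segmentProfiles := by
  rintro f ⟨hf0, hf⟩ g ⟨hg0, hg⟩ u v hu hv huv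
  exact ⟨by simp [hf0, hg0], hf.smul_add_smul hg hu hv huv⟩

section Profile

variable {n : ℕ} (a b : Fin n → ℝ)

def profile : (ℝ → ℝ) →ᵃ[ℝ] (Fin n → ℝ) :=
  (LinearMap.funLeft ℝ ℝ (a - b)).toAffineMap + AffineMap.const ℝ (ℝ → ℝ) a

@[simp]
lemma profile_apply (f : ℝ → ℝ) (i : Fin n) : profile a b f i = a i + f (a i - b i) := by
  simp [profile, add_comm]

lemma profile_const_mul (σ : ℝ) : profile a b (fun x => σ * x) = a + (-σ) • (b - a) := by
  ext i
  simp only [profile_apply, Pi.add_apply, Pi.smul_apply, Pi.sub_apply, smul_eq_mul]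
  ring

lemma profile_min_add (f g : ℝ → ℝ) (α β : ℝ) :
    profile a b (fun x => min (α + f x) (β + g x)) =
      fun i => min (α + profile a b f i) (β + profile a b g i) := by
  ext i
  simp only [profile_apply, ← min_add_add_left]
  congr 1 <;> ring

lemma profile_hinge_mem_tconv (s : ℝ) : profile a b (hinge s) ∈ tconv {a, b} := by
  have hmin : min (max s 0 - s) (max s 0) = 0 := by
    rcases le_total s 0 with hs | hs <;> simp [hs]
  convert tropConvex_tconv _ a (subset_tconv _ (Set.mem_insert a {b})) b
    (subset_tconv _ (Set.mem_insert_of_mem a rfl)) _ _ hmin using 1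
  ext i
  simp only [profile_apply, hinge]
  rcases le_total s (a i - b i) with h | h
  · rw [max_eq_right h, min_eq_right (by linarith)]
    ring
  · rw [max_eq_left h, min_eq_left (by linarith)]
    ring

lemma tropConvex_image_profile : TropConvex (profile a b '' segmentProfiles) := by
  rintro _ ⟨f, ⟨hf0, hf⟩, rfl⟩ _ ⟨g, ⟨hg0, hg⟩, rfl⟩ α β hαβ
  exact ⟨_, ⟨by simpa [hf0, hg0] using hαβ, hf.min_add hg α β⟩, profile_min_add a b f g α β⟩

lemma segment_subset_image_profile : segment ℝ a b ⊆ profile a b '' segmentProfiles := by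
  rw [segment_eq_image']
  rintro _ ⟨θ, hθ, rfl⟩
  refine ⟨fun x => -θ * x, ⟨by simp, HasSupportLines.const_mul ?_⟩, ?_⟩
  · exact ⟨by linarith [hθ.2], by linarith [hθ.1]⟩
  · rw [profile_const_mul, neg_neg]

lemma image_profile_subset_tconv_segment :
    profile a b '' segmentProfiles ⊆ tconv (segment ℝ a b) := by
  classical
  rintro _ ⟨f, ⟨hf0, hf⟩, rfl⟩
  choose σ hσ hsupp using hf
  set P := insert 0 (Finset.univ.image (a - b))
  have hP : P.Nonempty := Finset.insert_nonempty _ _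
  have hc : P.inf' hP (fun p => f p - σ p * p) = 0 := by
    refine le_antisymm ((Finset.inf'_le _ (Finset.mem_insert_self 0 _)).trans (by simp [hf0]))
      (Finset.le_inf' _ _ fun p _ => ?_)
    linarith [hsupp p 0]
  have hline : ∀ p, profile a b (fun x => σ p * x) ∈ segment ℝ a b := by
    intro p
    rw [profile_const_mul, segment_eq_image']
    exact ⟨-σ p, ⟨by linarith [(hσ p).2], by linarith [(hσ p).1]⟩, rfl⟩
  convert (tropConvex_tconv _).inf'_add_mem hP hc
    (fun p _ => subset_tconv _ (hline p)) using 1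
  ext i
  refine le_antisymm (Finset.le_inf' _ _ fun p _ => ?_) (Finset.inf'_le_of_le _
    (Finset.mem_insert_of_mem (Finset.mem_image_of_mem _ (Finset.mem_univ i))) (le_of_eq ?_))
  · simp only [profile_apply]
    linarith [hsupp p (a i - b i)]
  · simp only [profile_apply, Pi.sub_apply]
    ring

lemma image_profile_subset_convexHull :
    profile a b '' segmentProfiles ⊆ convexHull ℝ (tconv {a, b}) := by
  classical
  rintro _ ⟨f, ⟨hf0, hf⟩, rfl⟩
  obtain ⟨g, hg, hfg⟩ := hf.exists_mem_convexHull_eqOn hf0 (Finset.univ.image (a - b))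
  have hfg' : profile a b f = profile a b g := by
    ext i
    simp only [profile_apply]
    exact congrArg _ (hfg (Finset.mem_image_of_mem (a - b) (Finset.mem_univ i)))
  have hg' : profile a b g ∈ convexHull ℝ (profile a b '' Set.range hinge) := by
    rw [← AffineMap.image_convexHull]
    exact ⟨g, hg, rfl⟩
  rw [hfg']
  refine convexHull_mono ?_ hg'
  rintro _ ⟨_, ⟨s, rfl⟩, rfl⟩
  exact profile_hinge_mem_tconv a b s

end Profile

theorem tconv_segment_eq_convexHull_tconv (n : ℕ) (a b : Fin n → ℝ) :
    tconv (segment ℝ a b) = convexHull ℝ (tconv {a, b}) := by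
  have hS := tropConvex_image_profile a b
  have hseg := segment_subset_image_profile a b
  have hpair : {a, b} ⊆ profile a b '' segmentProfiles :=
    Set.pair_subset (hseg (left_mem_segment ℝ a b)) (hseg (right_mem_segment ℝ a b))
  apply subset_antisymm
  · exact (tconv_min hS hseg).trans (image_profile_subset_convexHull a b)
  · exact (convexHull_min (tconv_min hS hpair) (convex_segmentProfiles.affine_image _)).trans
      (image_profile_subset_tconv_segment a b)
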